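/- arXiv:2210.00953 — 2 statements merged into one kernel-verified Lean document; each statement's English description precedes it below -/
import Mathlib

section
/- For any integer t ≥ 1 with α·t ≤ 1/4 and every k ≥ t, the recursion satisfies: (i) ‖θ_k − θ_{k−t}‖ ≤ 2αt‖θ_{k−t}‖ + 2αt·b_max; (ii) ‖θ_k − θ_{k−t}‖ ≤ 4αt‖θ_k‖ + 4αt·b_max; and (iii) ‖θ_k − θ_{k−t}‖² ≤ 32α²t²‖θ_k‖² + 32α²t²·b_max². -/
/-!
Each step moves the iterate by at most `α (‖θ‖ + b_max)`. Over a window of `t` steps the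
iterates stay within `2αt (‖θ_{k-t}‖ + b_max)` of the starting point, by induction, as long as
`2αt ≤ 1` absorbs the growth of `‖θ‖` inside the window. Since `2αt ≤ 1/2`, the triangle inequality
`‖θ_{k-t}‖ ≤ ‖θ_k‖ + ‖θ_k - θ_{k-t}‖` lets the drift absorb itself, giving the bound in terms of the
endpoint, and `(x + y)² ≤ 2(x² + y²)` gives the squared form.
-/

lemma norm_succ_sub_le_of_affine_step {E : Type*} [SeminormedAddCommGroup E] [NormedSpace ℝ E]
    {α bmax : ℝ} (hα : 0 ≤ α) {A : ℕ → E →L[ℝ] E} (hA : ∀ k, ‖A k‖ ≤ 1) {b : ℕ → E}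
    (hb : ∀ k, ‖b k‖ ≤ bmax) {θ : ℕ → E} (hrec : ∀ k, θ (k + 1) = θ k + α • (A k (θ k) + b k))
    (m : ℕ) : ‖θ (m + 1) - θ m‖ ≤ α * (‖θ m‖ + bmax) := by
  have hAθ : ‖A m (θ m)‖ ≤ ‖θ m‖ := (A m).le_of_opNorm_le (hA m) _ |>.trans_eq (one_mul _)
  rw [hrec m, add_sub_cancel_left, norm_smul, Real.norm_of_nonneg hα]
  exact mul_le_mul_of_nonneg_left ((norm_add_le _ _).trans (add_le_add hAθ (hb m))) hα

section StepBound

variable {E : Type*} [SeminormedAddCommGroup E] {θ : ℕ → E} {α b : ℝ}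

lemma norm_add_sub_le_of_step_bound_start (hα : 0 ≤ α)
    (hstep : ∀ m, ‖θ (m + 1) - θ m‖ ≤ α * (‖θ m‖ + b)) (n t : ℕ) (ht : 2 * α * t ≤ 1) :
    ‖θ (n + t) - θ n‖ ≤ 2 * α * t * (‖θ n‖ + b) := by
  induction t with
  | zero => simp
  | succ t ih =>
    push_cast at ht ⊢
    have hdrift := ih (by linarith)
    have hS : 0 ≤ α * (‖θ n‖ + b) := (norm_nonneg _).trans (hstep n)
    have hnorm : ‖θ (n + t)‖ ≤ ‖θ n‖ + 2 * α * t * (‖θ n‖ + b) :=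
      (norm_le_insert' _ _).trans (by linarith)
    have hlast : ‖θ (n + t + 1) - θ (n + t)‖ ≤ α * (‖θ n‖ + 2 * α * t * (‖θ n‖ + b) + b) :=
      (hstep _).trans (mul_le_mul_of_nonneg_left (by linarith) hα)
    calc ‖θ (n + (t + 1)) - θ n‖
        ≤ ‖θ (n + t + 1) - θ (n + t)‖ + ‖θ (n + t) - θ n‖ := by
          rw [← add_assoc]; exact norm_sub_le_norm_sub_add_norm_sub _ _ _
      _ ≤ α * (‖θ n‖ + 2 * α * t * (‖θ n‖ + b) + b) + 2 * α * t * (‖θ n‖ + b) :=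
          add_le_add hlast hdrift
      _ ≤ 2 * α * (t + 1) * (‖θ n‖ + b) := by nlinarith

lemma norm_add_sub_le_of_step_bound_end (hα : 0 ≤ α)
    (hstep : ∀ m, ‖θ (m + 1) - θ m‖ ≤ α * (‖θ m‖ + b)) (n t : ℕ) (ht : 4 * α * t ≤ 1) :
    ‖θ (n + t) - θ n‖ ≤ 4 * α * t * (‖θ (n + t)‖ + b) := by
  have hdrift := norm_add_sub_le_of_step_bound_start hα hstep n t (by linarith)
  have hstart : ‖θ n‖ ≤ ‖θ (n + t)‖ + ‖θ (n + t) - θ n‖ := norm_le_insert _ _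
  have hc : 0 ≤ α * t := by positivity
  nlinarith [norm_nonneg (θ (n + t) - θ n), norm_nonneg (θ (n + t))]

end StepBound

theorem stmt2_general {d : ℕ} (α : ℝ) (hα : 0 < α) (bmax : ℝ)
    (M : ℕ → Matrix (Fin d) (Fin d) ℝ)
    (hM : ∀ k, ‖Matrix.toEuclideanCLM (𝕜 := ℝ) (M k)‖ ≤ 1)
    (bseq : ℕ → EuclideanSpace ℝ (Fin d)) (hb : ∀ k, ‖bseq k‖ ≤ bmax)
    (θ : ℕ → EuclideanSpace ℝ (Fin d))
    (hrec : ∀ k, θ (k + 1) = θ k + α • (Matrix.toEuclideanCLM (𝕜 := ℝ) (M k) (θ k) + bseq k))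
    (t : ℕ) (hαt : α * t ≤ 1 / 4) :
    ∀ k, t ≤ k →
      ‖θ k - θ (k - t)‖ ≤ 2 * α * t * ‖θ (k - t)‖ + 2 * α * t * bmax ∧
      ‖θ k - θ (k - t)‖ ≤ 4 * α * t * ‖θ k‖ + 4 * α * t * bmax ∧
      ‖θ k - θ (k - t)‖ ^ 2 ≤
        32 * α ^ 2 * t ^ 2 * ‖θ k‖ ^ 2 + 32 * α ^ 2 * t ^ 2 * bmax ^ 2 := by
  intro k hk
  obtain ⟨n, rfl⟩ : ∃ n, k = n + t := ⟨k - t, by omega⟩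
  rw [Nat.add_sub_cancel]
  have hstep := norm_succ_sub_le_of_affine_step hα.le hM hb hrec
  have hstart := norm_add_sub_le_of_step_bound_start hα.le hstep n t (by linarith)
  have hend := norm_add_sub_le_of_step_bound_end hα.le hstep n t (by linarith)
  refine ⟨by linarith, by linarith, ?_⟩
  calc ‖θ (n + t) - θ n‖ ^ 2 ≤ (4 * α * t * (‖θ (n + t)‖ + bmax)) ^ 2 :=
        pow_le_pow_left₀ (norm_nonneg _) hend 2
    _ ≤ 32 * α ^ 2 * t ^ 2 * ‖θ (n + t)‖ ^ 2 + 32 * α ^ 2 * t ^ 2 * bmax ^ 2 := by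
        nlinarith [sq_nonneg (‖θ (n + t)‖ - bmax), sq_nonneg (α * t)]

theorem stmt2 {d : ℕ} (hd : 1 ≤ d) (α : ℝ) (hα : 0 < α) (bmax : ℝ) (hbmax0 : 0 ≤ bmax)
    (M : ℕ → Matrix (Fin d) (Fin d) ℝ)
    (hM : ∀ k, ‖Matrix.toEuclideanCLM (𝕜 := ℝ) (M k)‖ ≤ 1)
    (bseq : ℕ → EuclideanSpace ℝ (Fin d)) (hb : ∀ k, ‖bseq k‖ ≤ bmax)
    (θ : ℕ → EuclideanSpace ℝ (Fin d))
    (hrec : ∀ k, θ (k + 1) = θ k + α • (Matrix.toEuclideanCLM (𝕜 := ℝ) (M k) (θ k) + bseq k))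
    (t : ℕ) (ht : 1 ≤ t) (hαt : α * t ≤ 1 / 4) :
    ∀ k, t ≤ k →
      ‖θ k - θ (k - t)‖ ≤ 2 * α * t * ‖θ (k - t)‖ + 2 * α * t * bmax ∧
      ‖θ k - θ (k - t)‖ ≤ 4 * α * t * ‖θ k‖ + 4 * α * t * bmax ∧
      ‖θ k - θ (k - t)‖ ^ 2 ≤
        32 * α ^ 2 * t ^ 2 * ‖θ k‖ ^ 2 + 32 * α ^ 2 * t ^ 2 * bmax ^ 2 :=
  stmt2_general α hα bmax M hM bseq hb θ hrec t hαt
end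

section
/- In the semi-simulator tabular TD(0) setting, the zero-bias condition holds: E[A(x_k)θ* + b(x_k) | x_{k+1}] = 0 almost surely, where A(x_k) = e_{s_k}(γ e_{s_k^next} − e_{s_k})ᵀ and b(x_k) = r(s_k) e_{s_k}. Consequently, under the stepsize condition of the convergence theorem (achievable after rescaling A, b and α so that sup_x‖A(x)‖ ≤ 1), the asymptotic bias of TD(0) vanishes: E[θ_∞] = θ* = V. -/
open MeasureTheory ProbabilityTheory Filter Finset
open scoped ENNReal RealInnerProductSpace ProbabilityTheory

set_option linter.unusedVariables false

noncomputable section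

/-- The `k`-step transition kernel `P^k` of a Markov kernel `P`. -/
def kernelPow {𝒳 : Type*} [MeasurableSpace 𝒳] (P : Kernel 𝒳 𝒳) : ℕ → Kernel 𝒳 𝒳
  | 0 => Kernel.id
  | n + 1 => (kernelPow P n) ∘ₖ P

/-- `t` satisfies the defining property of the `ε`-mixing time of the chain with kernel `P`
with respect to the functions `(A, b)`: for every initial state `y` and every `k ≥ t`,
`‖E[A(x_k) ∣ x_0 = y] - Ā‖ ≤ ε * A_max` and `‖E[b(x_k) ∣ x_0 = y] - b̄‖ ≤ ε * b_max`.
The `ε`-mixing time is the least such `t ≥ 1`. -/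
def IsMixingBdd {𝒳 : Type*} [MeasurableSpace 𝒳] {n : Type*} [Fintype n] [DecidableEq n]
    (P : Kernel 𝒳 𝒳) (A : 𝒳 → Matrix n n ℝ) (b : 𝒳 → EuclideanSpace ℝ n)
    (Abar : Matrix n n ℝ) (bbar : EuclideanSpace ℝ n)
    (Amax bmax ε : ℝ) (t : ℕ) : Prop :=
  1 ≤ t ∧ ∀ y : 𝒳, ∀ k, t ≤ k →
    ‖(∫ z, Matrix.toEuclideanCLM (𝕜 := ℝ) (A z) ∂(kernelPow P k y)) -
        Matrix.toEuclideanCLM (𝕜 := ℝ) Abar‖ ≤ ε * Amax ∧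
    ‖(∫ z, b z ∂(kernelPow P k y)) - bbar‖ ≤ ε * bmax

/-- The transition kernel of the joint Markov chain `(x_k, θ_k)` for the LSA iteration
`θ_{k+1} = θ_k + α (A(x_k) θ_k + b(x_k))` driven by the chain with kernel `P`. -/
def jointKernel {𝒳 : Type*} [MeasurableSpace 𝒳] {n : Type*} [Fintype n] [DecidableEq n]
    (P : Kernel 𝒳 𝒳) [IsMarkovKernel P]
    (A : 𝒳 → Matrix n n ℝ) (b : 𝒳 → EuclideanSpace ℝ n) (α : ℝ)
    (hstep : Measurable fun q : (𝒳 × EuclideanSpace ℝ n) × 𝒳 =>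
      q.1.2 + α • (Matrix.toEuclideanCLM (𝕜 := ℝ) (A q.1.1) q.1.2 + b q.1.1)) :
    Kernel (𝒳 × EuclideanSpace ℝ n) (𝒳 × EuclideanSpace ℝ n) :=
  (P.comap Prod.fst measurable_fst) ⊗ₖ (Kernel.deterministic _ hstep)

/-!
Zero bias is local in the current state: by the Bellman equation the TD error
`r(s) + γ V(s') - V(s)` has mean zero under `s' ∼ P(s, ·)`, so
`∑ s', P(s, s') • (A(s, s') V + b(s, s')) = 0`. Every weighting of the pairs that factors through
`P(s, s')` therefore annihilates `A V + b`; this gives the zero-bias condition and `Ā V + b̄ = 0`,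
and the Lyapunov equation makes `Ā` injective, so `θ* = V`.

For the mean of `θ_∞`, invariance of `ν` gives linear recursions for the mass `w(x)` and the
partial mean `m(x) = E[θ_∞; x_∞ = x]` of each slice. Primitivity forces `w(s, s') = π(s) P(s, s')`,
and by zero bias `d(x) = m(x) - w(x) V` solves the homogeneous recursion
`d(q) = ∑ x, K(x, q) (I + α A(x)) d(x)`. With `G(t) = ∑ s', d(t, s')`, summing the recursion over
the target state kills the TD error of every column of `G`; each column is then `P`-invariant,
hence equal to `κ(u) π`, and `κ = γ P κ` with `γ < 1` forces `κ = 0`. So `m(x) = w(x) V` and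
`E[θ_∞] = ∑ x, m(x) = V`.
-/

section SignedSums

variable {ι : Type*} [Fintype ι] {v : ι → ℝ}

theorem exists_neg_of_sum_eq_zero (hsum : ∑ i, v i = 0) (hv : v ≠ 0) : ∃ i, v i < 0 := by
  by_contra! hnonneg
  exact hv <| funext fun i =>
    (Finset.sum_eq_zero_iff_of_nonneg fun j _ => hnonneg j).1 hsum i (Finset.mem_univ i)

theorem abs_sum_mul_lt_sum_abs_mul {w : ι → ℝ} (hw : ∀ s, 0 < w s) {i j : ι}
    (hi : v i < 0) (hj : 0 < v j) : |∑ s, v s * w s| < ∑ s, |v s| * w s := by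
  rw [abs_lt, ← neg_lt, ← Finset.sum_neg_distrib]
  constructor
  · refine Finset.sum_lt_sum (fun s _ => ?_) ⟨j, Finset.mem_univ j, ?_⟩
    · rw [← neg_mul]; exact mul_le_mul_of_nonneg_right (neg_le_abs _) (hw s).le
    · rw [← neg_mul]; exact mul_lt_mul_of_pos_right (by rw [abs_of_pos hj]; linarith) (hw j)
  · refine Finset.sum_lt_sum (fun s _ => ?_) ⟨i, Finset.mem_univ i, ?_⟩
    · exact mul_le_mul_of_nonneg_right (le_abs_self _) (hw s).le
    · exact mul_lt_mul_of_pos_right (by rw [abs_of_neg hi]; linarith) (hw i)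

end SignedSums

namespace Matrix

variable {ι : Type*} [Fintype ι] [DecidableEq ι] {P : Matrix ι ι ℝ} {v : ι → ℝ}

theorem vecMul_pow_eq_self {R : Type*} [Semiring R] {P : Matrix ι ι R} {v : ι → R}
    (hv : v ᵥ* P = v) (N : ℕ) : v ᵥ* P ^ N = v := by
  induction N with
  | zero => simp
  | succ N ih => rw [pow_succ, ← vecMul_vecMul, ih, hv]

theorem sum_vecMul_of_mem_rowStochastic (hP : P ∈ rowStochastic ℝ ι) (v : ι → ℝ) :
    ∑ j, (v ᵥ* P) j = ∑ i, v i := by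
  have h := dotProduct_mulVec v P 1
  rw [one_vecMul_of_mem_rowStochastic hP] at h
  simpa [dotProduct] using h.symm

theorem abs_mulVec_le_of_mem_rowStochastic (hP : P ∈ rowStochastic ℝ ι) {c : ℝ}
    (hv : ∀ j, |v j| ≤ c) (i : ι) : |(P *ᵥ v) i| ≤ c := calc
  |(P *ᵥ v) i| ≤ ∑ j, P i j * |v j| := by
    simpa [mulVec, dotProduct, abs_mul, abs_of_nonneg (hP.1 i _)] using
      Finset.abs_sum_le_sum_abs (fun j => P i j * v j) Finset.univ
  _ ≤ ∑ j, P i j * c := by gcongr with j; exact hP.1 i j; exact hv j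
  _ = c := by rw [← Finset.sum_mul, sum_row_of_mem_rowStochastic hP, one_mul]

theorem eq_zero_of_vecMul_eq_self_of_sum_eq_zero (hP : P ∈ rowStochastic ℝ ι)
    (hprim : ∃ N : ℕ, ∀ i j, 0 < (P ^ N) i j) (hv : v ᵥ* P = v) (hsum : ∑ i, v i = 0) :
    v = 0 := by
  by_contra hv0
  obtain ⟨N, hN⟩ := hprim
  obtain ⟨i, hi⟩ := exists_neg_of_sum_eq_zero hsum hv0
  obtain ⟨j, hj⟩ := exists_neg_of_sum_eq_zero (v := -v) (by simp [hsum]) (neg_ne_zero.2 hv0)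
  have hlt : ∑ t, |v t| < ∑ t, ((fun s => |v s|) ᵥ* P ^ N) t := by
    refine Finset.sum_lt_sum_of_nonempty ⟨i, Finset.mem_univ i⟩ fun t _ => ?_
    conv_lhs => rw [← vecMul_pow_eq_self hv N]
    exact abs_sum_mul_lt_sum_abs_mul (fun s => hN s t) hi (by simpa using hj)
  rw [sum_vecMul_of_mem_rowStochastic (pow_mem hP N)] at hlt
  exact lt_irrefl _ hlt

theorem eq_sum_smul_of_vecMul_eq_self (hP : P ∈ rowStochastic ℝ ι)
    (hprim : ∃ N : ℕ, ∀ i j, 0 < (P ^ N) i j) {π : ι → ℝ} (hπ1 : ∑ i, π i = 1)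
    (hπ : π ᵥ* P = π) (hv : v ᵥ* P = v) : v = (∑ i, v i) • π := by
  refine sub_eq_zero.1 (eq_zero_of_vecMul_eq_self_of_sum_eq_zero hP hprim ?_ ?_)
  · rw [sub_vecMul, smul_vecMul, hv, hπ]
  · simp [Finset.sum_sub_distrib, ← Finset.mul_sum, hπ1]

theorem pos_of_vecMul_eq_self (hP : P ∈ rowStochastic ℝ ι)
    (hprim : ∃ N : ℕ, ∀ i j, 0 < (P ^ N) i j) {π : ι → ℝ} (hπ0 : ∀ i, 0 ≤ π i)
    (hπ1 : ∑ i, π i = 1) (hπ : π ᵥ* P = π) (j : ι) : 0 < π j := by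
  obtain ⟨N, hN⟩ := hprim
  obtain ⟨i, hi⟩ : ∃ i, 0 < π i := by
    by_contra! h
    linarith [Finset.sum_nonpos fun i (_ : i ∈ Finset.univ) => h i]
  rw [← vecMul_pow_eq_self hπ N]
  exact lt_of_lt_of_le (mul_pos hi (hN i j)) <|
    Finset.single_le_sum (f := fun s => π s * (P ^ N) s j)
      (fun s _ => mul_nonneg (hπ0 s) (hN s j).le) (Finset.mem_univ i)

theorem eq_zero_of_eq_smul_mulVec (hP : P ∈ rowStochastic ℝ ι) {γ : ℝ} (hγ0 : 0 ≤ γ)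
    (hγ1 : γ < 1) (hv : v = γ • P *ᵥ v) : v = 0 := by
  funext u
  have : Nonempty ι := ⟨u⟩
  obtain ⟨i, hi⟩ := Finite.exists_max fun j => |v j|
  have hle : |v i| ≤ γ * |v i| := calc
    |v i| = γ * |(P *ᵥ v) i| := by
      conv_lhs => rw [hv]
      rw [Pi.smul_apply, smul_eq_mul, abs_mul, abs_of_nonneg hγ0]
    _ ≤ γ * |v i| := mul_le_mul_of_nonneg_left (abs_mulVec_le_of_mem_rowStochastic hP hi i) hγ0
  have hvi : |v i| = 0 := by nlinarith [abs_nonneg (v i)]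
  exact abs_nonpos_iff.1 (hvi ▸ hi u)

theorem eq_zero_of_mulVec_eq_zero_of_lyapunov {R : Type*} [CommRing R] [LinearOrder R]
    [IsStrictOrderedRing R] {A Γ : Matrix ι ι R} (h : Aᵀ * Γ + Γ * A = -1) {v : ι → R}
    (hv : A *ᵥ v = 0) : v = 0 := by
  have := congrArg (fun M => v ⬝ᵥ M *ᵥ v) h
  simp only [add_mulVec, ← mulVec_mulVec, hv, mulVec_zero, dotProduct_mulVec v Aᵀ,
    vecMul_transpose, zero_dotProduct, add_zero, neg_mulVec, one_mulVec, dotProduct_neg,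
    zero_eq_neg] at this
  exact dotProduct_self_eq_zero.1 this

theorem toEuclideanCLM_injective_of_lyapunov {A Γ : Matrix ι ι ℝ} (h : Aᵀ * Γ + Γ * A = -1) :
    Function.Injective (toEuclideanCLM (𝕜 := ℝ) A) := by
  refine (injective_iff_map_eq_zero _).2 fun v hv => WithLp.ofLp_injective 2 ?_
  exact eq_zero_of_mulVec_eq_zero_of_lyapunov h (by rw [← ofLp_toEuclideanCLM, hv]; rfl)

theorem toEuclideanCLM_add_eq_sum {κ : Type*} [Fintype κ] (w : κ → ℝ)
    {A : κ → Matrix ι ι ℝ} {Abar : Matrix ι ι ℝ} (hAbar : ∀ i j, Abar i j = ∑ p, w p * A p i j)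
    {b : κ → EuclideanSpace ℝ ι} {bbar : EuclideanSpace ℝ ι}
    (hbbar : ∀ j, bbar j = ∑ p, w p * b p j) (v : EuclideanSpace ℝ ι) :
    toEuclideanCLM (𝕜 := ℝ) Abar v + bbar = ∑ p, w p • (toEuclideanCLM (𝕜 := ℝ) (A p) v + b p) := by
  have hAbar' : Abar = ∑ p, w p • A p := by ext i j; simp [hAbar, sum_apply]
  have hbbar' : bbar = ∑ p, w p • b p := by ext j; simp [hbbar, WithLp.ofLp_sum]
  simp [hAbar', hbbar', Finset.sum_add_distrib, smul_add]

end Matrix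

theorem sub_smul_eq_sum_of_zero_bias {𝒳 R E : Type*} [Fintype 𝒳] [CommRing R] [AddCommGroup E]
    [Module R E] (L : 𝒳 → E →ₗ[R] E) (b : 𝒳 → E) (α : R) (k : 𝒳 → 𝒳 → R) {w : 𝒳 → R}
    {m : 𝒳 → E} {θ : E} (hw : ∀ q, w q = ∑ x, k x q * w x)
    (hm : ∀ q, m q = ∑ x, k x q • (m x + α • (L x (m x) + w x • b x)))
    (hbias : ∀ q, ∑ x, (k x q * w x) • (L x θ + b x) = 0) (q : 𝒳) :
    m q - w q • θ = ∑ x, k x q • (m x - w x • θ + α • L x (m x - w x • θ)) := by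
  have hterm : ∀ x, k x q • (m x - w x • θ + α • L x (m x - w x • θ)) =
      k x q • (m x + α • (L x (m x) + w x • b x)) - (k x q * w x) • θ
        - α • (k x q * w x) • (L x θ + b x) := fun x => by
    rw [map_sub, map_smul]
    module
  rw [Finset.sum_congr rfl fun x _ => hterm x, Finset.sum_sub_distrib, Finset.sum_sub_distrib,
    ← Finset.smul_sum, hbias, ← Finset.sum_smul, ← hm, ← hw, smul_zero, sub_zero]

theorem sum_mul_smul_eq_zero {𝒮 M : Type*} [Fintype 𝒮] [AddCommGroup M] [Module ℝ M]
    {P : 𝒮 → 𝒮 → ℝ} {Y : 𝒮 × 𝒮 → M} (hY : ∀ s, ∑ s', P s s' • Y (s, s') = 0) (f : 𝒮 → ℝ) :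
    ∑ p : 𝒮 × 𝒮, (f p.1 * P p.1 p.2) • Y p = 0 := by
  simp [Fintype.sum_prod_type, mul_smul, ← Finset.smul_sum, hY]

namespace MeasureTheory.Measure

variable {𝒳 E : Type*} [MeasurableSpace 𝒳] [MeasurableSpace E]

def slice (ν : Measure (𝒳 × E)) (x : 𝒳) : Measure E :=
  (ν.restrict (Prod.fst ⁻¹' {x})).map Prod.snd

instance (ν : Measure (𝒳 × E)) [IsFiniteMeasure ν] (x : 𝒳) : IsFiniteMeasure (ν.slice x) := by
  unfold slice; infer_instance

theorem slice_apply (ν : Measure (𝒳 × E)) (x : 𝒳) {B : Set E} (hB : MeasurableSet B) :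
    ν.slice x B = ν ({x} ×ˢ B) := by
  rw [slice, map_apply measurable_snd hB, restrict_apply (measurable_snd hB)]
  congr 1
  ext p
  simp [and_comm]

theorem slice_le_map_snd (ν : Measure (𝒳 × E)) (x : 𝒳) : ν.slice x ≤ ν.map Prod.snd :=
  map_mono restrict_le_self measurable_snd

variable [MeasurableSingletonClass 𝒳] [Fintype 𝒳] {ν : Measure (𝒳 × E)}

theorem sum_slice (ν : Measure (𝒳 × E)) : ∑ x, ν.slice x = ν.map Prod.snd := by
  ext B hB
  rw [finsetSum_apply, map_apply measurable_snd hB, ← Set.univ_prod]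
  simp_rw [slice_apply ν _ hB]
  rw [← measure_biUnion_finset _ fun x _ => (measurableSet_singleton x).prod hB]
  · simp only [Finset.mem_univ, Set.iUnion_true]
    rw [← Set.iUnion_prod_const, Set.iUnion_of_singleton]
  · intro x _ y _ hxy
    simp [Set.disjoint_prod, hxy]

theorem sum_measureReal_slice_univ [IsFiniteMeasure ν] :
    ∑ x, (ν.slice x).real Set.univ = ν.real Set.univ := by
  simp_rw [measureReal_def]
  rw [← ENNReal.toReal_sum fun x _ => measure_ne_top _ _, ← finsetSum_apply, sum_slice,
    map_apply measurable_snd MeasurableSet.univ, Set.preimage_univ]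

variable {F : Type*} [NormedAddCommGroup F] {f : E → F}

omit [MeasurableSingletonClass 𝒳] [Fintype 𝒳] in
theorem integrable_slice (hf : AEStronglyMeasurable f (ν.map Prod.snd))
    (h : Integrable (fun p => f p.2) ν) (x : 𝒳) : Integrable f (ν.slice x) :=
  ((integrable_map_measure hf measurable_snd.aemeasurable).2 h).mono_measure
    (slice_le_map_snd ν x)

theorem sum_integral_slice [NormedSpace ℝ F] (hf : AEStronglyMeasurable f (ν.map Prod.snd))
    (h : Integrable (fun p => f p.2) ν) : ∑ x, ∫ θ, f θ ∂ν.slice x = ∫ p, f p.2 ∂ν := by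
  rw [← integral_finsetSum_measure fun x _ => integrable_slice hf h x, sum_slice,
    integral_map measurable_snd.aemeasurable hf]

end MeasureTheory.Measure

namespace LSA

variable {𝒳 : Type*} [MeasurableSpace 𝒳] {n : Type*} [Fintype n] [DecidableEq n]

def step (A : 𝒳 → Matrix n n ℝ) (b : 𝒳 → EuclideanSpace ℝ n) (α : ℝ) (x : 𝒳)
    (θ : EuclideanSpace ℝ n) : EuclideanSpace ℝ n :=
  θ + α • (Matrix.toEuclideanCLM (𝕜 := ℝ) (A x) θ + b x)

variable (P : Kernel 𝒳 𝒳) [IsMarkovKernel P] (A : 𝒳 → Matrix n n ℝ)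
  (b : 𝒳 → EuclideanSpace ℝ n) (α : ℝ)
  (hstep : Measurable fun q : (𝒳 × EuclideanSpace ℝ n) × 𝒳 =>
      q.1.2 + α • (Matrix.toEuclideanCLM (𝕜 := ℝ) (A q.1.1) q.1.2 + b q.1.1))

omit [MeasurableSpace 𝒳] in
theorem continuous_step (x : 𝒳) : Continuous (step A b α x) := by
  unfold step; fun_prop

theorem jointKernel_apply (p : 𝒳 × EuclideanSpace ℝ n) :
    jointKernel P A b α hstep p = (P p.1).map fun x' => (x', step A b α p.1 p.2) := by
  ext s hs
  rw [jointKernel, Kernel.compProd_apply hs, Measure.map_apply measurable_prodMk_right hs,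
    Kernel.comap_apply, ← lintegral_indicator_one (measurable_prodMk_right hs)]
  refine lintegral_congr fun x' => ?_
  rw [Kernel.deterministic_apply, Measure.dirac_apply' _ (measurable_prodMk_left hs)]
  rfl

variable [MeasurableSingletonClass 𝒳] [Fintype 𝒳]

theorem slice_eq_sum_of_invariant {ν : Measure (𝒳 × EuclideanSpace ℝ n)}
    (hν : (jointKernel P A b α hstep).Invariant ν) (q : 𝒳) :
    ν.slice q = ∑ x, P x {q} • (ν.slice x).map (step A b α x) := by
  ext B hB
  have hqB : MeasurableSet ({q} ×ˢ B) := (measurableSet_singleton q).prod hB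
  have hstepB : ∀ x, MeasurableSet ({x} ×ˢ (step A b α x ⁻¹' B)) := fun x =>
    (measurableSet_singleton x).prod ((continuous_step A b α x).measurable hB)
  have hterm : ∀ x, (P x {q} • (ν.slice x).map (step A b α x)) B =
      ∫⁻ p, P x {q} * ({x} ×ˢ (step A b α x ⁻¹' B)).indicator 1 p ∂ν := fun x => by
    rw [Measure.smul_apply, Measure.map_apply (continuous_step A b α x).measurable hB,
      Measure.slice_apply _ _ ((continuous_step A b α x).measurable hB),
      lintegral_const_mul _ (measurable_one.indicator (hstepB x)),
      lintegral_indicator_one (hstepB x), smul_eq_mul]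
  rw [Measure.slice_apply _ _ hB, Measure.finsetSum_apply]
  conv_lhs => rw [← hν.def, Measure.bind_apply hqB (Kernel.aemeasurable _)]
  simp_rw [hterm]
  rw [← lintegral_finsetSum _ fun x _ => (measurable_one.indicator (hstepB x)).const_mul _]
  refine lintegral_congr fun p => ?_
  rw [jointKernel_apply, Measure.map_apply measurable_prodMk_right hqB,
    Finset.sum_eq_single p.1]
  · obtain ⟨y, θ⟩ := p
    by_cases h : step A b α y θ ∈ B <;> simp [h, Set.preimage]
  · intro x _ hx
    simp [Ne.symm hx]
  · simp

theorem integral_slice_eq_sum_integral_comp_step {ν : Measure (𝒳 × EuclideanSpace ℝ n)}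
    (hν : (jointKernel P A b α hstep).Invariant ν) (q : 𝒳)
    {F : Type*} [NormedAddCommGroup F] [NormedSpace ℝ F] {f : EuclideanSpace ℝ n → F}
    (hf : Continuous f) (hint : ∀ x, Integrable (f ∘ step A b α x) (ν.slice x)) :
    ∫ θ, f θ ∂ν.slice q = ∑ x, (P x {q}).toReal • ∫ θ, f (step A b α x θ) ∂ν.slice x := by
  have hmap : ∀ x, AEMeasurable (step A b α x) (ν.slice x) := fun x =>
    (continuous_step A b α x).aemeasurable
  rw [slice_eq_sum_of_invariant P A b α hstep hν q, integral_finsetSum_measure fun x _ =>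
    ((integrable_map_measure hf.aestronglyMeasurable (hmap x)).2 (hint x)).smul_measure
      (measure_ne_top _ _)]
  refine Finset.sum_congr rfl fun x _ => ?_
  rw [integral_smul_measure, integral_map (hmap x) hf.aestronglyMeasurable]

theorem measureReal_slice_eq_sum_of_invariant {ν : Measure (𝒳 × EuclideanSpace ℝ n)}
    [IsFiniteMeasure ν] (hν : (jointKernel P A b α hstep).Invariant ν) (q : 𝒳) :
    (ν.slice q).real Set.univ = ∑ x, (P x {q}).toReal * (ν.slice x).real Set.univ := by
  simpa using integral_slice_eq_sum_integral_comp_step P A b α hstep hν q (f := fun _ => (1 : ℝ))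
    continuous_const fun x => integrable_const _

theorem integral_slice_eq_sum_of_invariant {ν : Measure (𝒳 × EuclideanSpace ℝ n)}
    [IsFiniteMeasure ν] (hν : (jointKernel P A b α hstep).Invariant ν)
    (hint : Integrable (fun p => p.2) ν) (q : 𝒳) :
    ∫ θ, θ ∂ν.slice q = ∑ x, (P x {q}).toReal • (∫ θ, θ ∂ν.slice x +
      α • (Matrix.toEuclideanCLM (𝕜 := ℝ) (A x) (∫ θ, θ ∂ν.slice x) +
        (ν.slice x).real Set.univ • b x)) := by
  have hθ : ∀ x, Integrable (fun θ => θ) (ν.slice x) :=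
    Measure.integrable_slice aestronglyMeasurable_id hint
  have hAθ : ∀ x, Integrable (fun θ => Matrix.toEuclideanCLM (𝕜 := ℝ) (A x) θ) (ν.slice x) :=
    fun x => (Matrix.toEuclideanCLM (𝕜 := ℝ) (A x)).integrable_comp (hθ x)
  have hdrift : ∀ x, Integrable
      (fun θ => α • (Matrix.toEuclideanCLM (𝕜 := ℝ) (A x) θ + b x)) (ν.slice x) :=
    fun x => ((hAθ x).add (integrable_const _)).smul α
  rw [integral_slice_eq_sum_integral_comp_step P A b α hstep hν q (f := fun θ => θ) continuous_id'
    fun x => (hθ x).add (hdrift x)]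
  refine Finset.sum_congr rfl fun x _ => ?_
  simp only [step]
  rw [integral_add (hθ x) (hdrift x), integral_smul, integral_add (hAθ x) (integrable_const _),
    integral_const, ContinuousLinearMap.integral_comp_comm _ (hθ x)]

end LSA

namespace TabularTD

open Matrix

variable {𝒮 : Type*} [Fintype 𝒮] [DecidableEq 𝒮] {P : Matrix 𝒮 𝒮 ℝ} {π : 𝒮 → ℝ} {c γ : ℝ}
  {A : 𝒮 × 𝒮 → Matrix 𝒮 𝒮 ℝ}

theorem eq_stationary_of_pair_recurrence (hP : P ∈ rowStochastic ℝ 𝒮)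
    (hprim : ∃ N : ℕ, ∀ i j, 0 < (P ^ N) i j) (hπ1 : ∑ i, π i = 1) (hπ : π ᵥ* P = π)
    {w : 𝒮 × 𝒮 → ℝ} (hw : ∀ q, w q = ∑ x, P x.1 q.1 * P q.1 q.2 * w x) (hw1 : ∑ q, w q = 1)
    (q : 𝒮 × 𝒮) : w q = π q.1 * P q.1 q.2 := by
  set ws : 𝒮 → ℝ := fun s => ∑ s', w (s, s')
  have hfac : ∀ q, w q = P q.1 q.2 * (ws ᵥ* P) q.1 := fun q => by
    simp only [hw q, Fintype.sum_prod_type, vecMul, dotProduct, ws, Finset.mul_sum,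
      Finset.sum_mul]
    exact Finset.sum_congr rfl fun _ _ => Finset.sum_congr rfl fun _ _ => by ring
  have hinv : ws ᵥ* P = ws := funext fun t => by
    simp only [ws, hfac (t, _), ← Finset.sum_mul, sum_row_of_mem_rowStochastic hP, one_mul]
  have hws : ws = π := by
    have hsum : ∑ s, ws s = 1 := by rw [← hw1, Fintype.sum_prod_type]
    simpa [hsum] using eq_sum_smul_of_vecMul_eq_self hP hprim hπ1 hπ hinv
  rw [hfac, hinv, hws, mul_comm]

theorem eq_zero_of_column_recurrence (hP : P ∈ rowStochastic ℝ 𝒮)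
    (hprim : ∃ N : ℕ, ∀ i j, 0 < (P ^ N) i j) (hπ0 : ∀ i, 0 ≤ π i) (hπ1 : ∑ i, π i = 1)
    (hπ : π ᵥ* P = π) (hγ0 : 0 ≤ γ) (hγ1 : γ < 1) {a : ℝ} (ha : a ≠ 0)
    {G : 𝒮 → 𝒮 → ℝ} (hG : ∀ t u,
      G t u = ∑ s, P s t * G s u + a * P u t * (γ * ∑ s', P u s' * G u s' - G u u)) :
    G = 0 := by
  have hδ : ∀ u, γ * ∑ s', P u s' * G u s' - G u u = 0 := fun u => by
    have h := Finset.sum_congr rfl fun t (_ : t ∈ Finset.univ) => hG t u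
    rw [Finset.sum_add_distrib, Finset.sum_comm, ← Finset.sum_mul, ← Finset.mul_sum,
      sum_row_of_mem_rowStochastic hP, mul_one] at h
    simp only [← Finset.sum_mul, sum_row_of_mem_rowStochastic hP, one_mul] at h
    exact (mul_eq_zero.1 (by linarith : a * _ = 0)).resolve_left ha
  have hcol : ∀ u, (fun t => G t u) ᵥ* P = fun t => G t u := fun u => funext fun t => by
    rw [hG t u, hδ u, mul_zero, add_zero]
    simp [vecMul, dotProduct, mul_comm]
  set κ : 𝒮 → ℝ := fun u => ∑ t, G t u
  have hform : ∀ t u, G t u = κ u * π t := fun t u => by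
    simpa using congrFun (eq_sum_smul_of_vecMul_eq_self hP hprim hπ1 hπ (hcol u)) t
  have hκ : κ = γ • P *ᵥ κ := funext fun u => by
    have h := hδ u
    simp only [hform, ← mul_assoc, ← Finset.sum_mul] at h
    have hπu := pos_of_vecMul_eq_self hP hprim hπ0 hπ1 hπ u
    simp only [Pi.smul_apply, smul_eq_mul, mulVec, dotProduct]
    nlinarith
  have hκ0 := eq_zero_of_eq_smul_mulVec hP hγ0 hγ1 hκ
  funext t u
  simp [hform, hκ0]

theorem eq_zero_of_pair_recurrence (hP : P ∈ rowStochastic ℝ 𝒮)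
    (hprim : ∃ N : ℕ, ∀ i j, 0 < (P ^ N) i j) (hπ0 : ∀ i, 0 ≤ π i) (hπ1 : ∑ i, π i = 1)
    (hπ : π ᵥ* P = π) (hγ0 : 0 ≤ γ) (hγ1 : γ < 1) {a : ℝ} (ha : a ≠ 0)
    {d : 𝒮 × 𝒮 → 𝒮 → ℝ} (hd : ∀ q u, d q u = ∑ x, P x.1 q.1 * P q.1 q.2 *
      (d x u + a * if u = x.1 then γ * d x x.2 - d x x.1 else 0)) :
    d = 0 := by
  set F : 𝒮 → 𝒮 → ℝ := fun t u => ∑ x : 𝒮 × 𝒮,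
    P x.1 t * (d x u + a * if u = x.1 then γ * d x x.2 - d x x.1 else 0)
  set G : 𝒮 → 𝒮 → ℝ := fun t u => ∑ s', d (t, s') u
  have hdF : ∀ q u, d q u = P q.1 q.2 * F q.1 u := fun q u => by
    rw [hd, Finset.mul_sum]
    exact Finset.sum_congr rfl fun _ _ => by ring
  have hGF : G = F := funext₂ fun t u => by
    simp only [G, hdF (t, _), ← Finset.sum_mul, sum_row_of_mem_rowStochastic hP, one_mul]
  have hdG : ∀ q u, d q u = P q.1 q.2 * G q.1 u := by rw [hGF]; exact hdF
  have hrow : ∀ s t u, ∑ s', P s t *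
      (d (s, s') u + a * if u = s then γ * d (s, s') s' - d (s, s') s else 0) =
      P s t * G s u + if u = s then a * P u t * (γ * ∑ s', P u s' * G u s' - G u u) else 0 := by
    intro s t u
    simp only [hdG]
    by_cases h : u = s
    · subst h
      have hsplit : ∀ s', P u t * (P u s' * G u u + a * (γ * (P u s' * G u s') - P u s' * G u u))
          = (P u t * G u u - a * P u t * G u u) * P u s' + a * P u t * γ * (P u s' * G u s') :=
        fun s' => by ring
      simp only [if_true, hsplit, Finset.sum_add_distrib, ← Finset.mul_sum,
        sum_row_of_mem_rowStochastic hP]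
      ring
    · simp only [h, if_false, mul_zero, add_zero, ← Finset.mul_sum, ← Finset.sum_mul,
        sum_row_of_mem_rowStochastic hP, one_mul]
  have hG0 : G = 0 := eq_zero_of_column_recurrence hP hprim hπ0 hπ1 hπ hγ0 hγ1 ha fun t u => by
    conv_lhs => rw [hGF]
    simp only [F, Fintype.sum_prod_type, hrow, Finset.sum_add_distrib, Finset.sum_ite_eq,
      Finset.mem_univ, if_true]
  funext q u
  simp [hdG, hG0]

theorem toEuclideanCLM_apply (hA : ∀ p i j, A p i j =
      c * (if i = p.1 then γ * (if j = p.2 then 1 else 0) - (if j = p.1 then 1 else 0) else 0))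
    (x : 𝒮 × 𝒮) (v : EuclideanSpace ℝ 𝒮) (u : 𝒮) :
    Matrix.toEuclideanCLM (𝕜 := ℝ) (A x) v u = if u = x.1 then c * (γ * v x.2 - v x.1) else 0 := by
  rw [Matrix.ofLp_toEuclideanCLM]
  by_cases h : u = x.1 <;> simp [h, hA, Matrix.mulVec, dotProduct, mul_sub, sub_mul,
    Finset.sum_sub_distrib, ← mul_assoc]

theorem sum_smul_tdError_eq_zero (hA : ∀ p i j, A p i j =
      c * (if i = p.1 then γ * (if j = p.2 then 1 else 0) - (if j = p.1 then 1 else 0) else 0))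
    {r : 𝒮 → ℝ} {b : 𝒮 × 𝒮 → EuclideanSpace ℝ 𝒮}
    (hb : ∀ p j, b p j = c * (if j = p.1 then r p.1 else 0)) (hP : ∀ s, ∑ s', P s s' = 1)
    {V : EuclideanSpace ℝ 𝒮}
    (hV : ∀ s, V s = r s + γ * ∑ s', P s s' * V s') (s : 𝒮) :
    ∑ s', P s s' • (Matrix.toEuclideanCLM (𝕜 := ℝ) (A (s, s')) V + b (s, s')) = 0 := by
  ext u
  simp only [WithLp.ofLp_sum, PiLp.smul_apply, PiLp.add_apply, Finset.sum_apply,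
    toEuclideanCLM_apply hA, hb, smul_eq_mul]
  by_cases h : u = s
  · subst h
    have hsplit : ∀ s', P u s' * (c * (γ * V s' - V u) + c * r u) =
        c * γ * (P u s' * V s') + c * (r u - V u) * P u s' := fun s' => by ring
    simp only [if_true, hsplit, Finset.sum_add_distrib, ← Finset.mul_sum, hP]
    rw [hV u]
    simp only [WithLp.ofLp_zero, Pi.zero_apply]
    ring
  · simp [h]

theorem integral_snd_eq_of_invariant [MeasurableSpace 𝒮] [MeasurableSingletonClass 𝒮]
    (hP : P ∈ rowStochastic ℝ 𝒮) (hprim : ∃ N : ℕ, ∀ i j, 0 < (P ^ N) i j)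
    (hπ0 : ∀ i, 0 ≤ π i) (hπ1 : ∑ i, π i = 1) (hπ : π ᵥ* P = π) (hγ0 : 0 ≤ γ) (hγ1 : γ < 1)
    (hc : c ≠ 0) (hA : ∀ p i j, A p i j =
      c * (if i = p.1 then γ * (if j = p.2 then 1 else 0) - (if j = p.1 then 1 else 0) else 0))
    {b : 𝒮 × 𝒮 → EuclideanSpace ℝ 𝒮} {V : EuclideanSpace ℝ 𝒮}
    (hbias : ∀ q : 𝒮 × 𝒮, ∑ p : 𝒮 × 𝒮, ((π p.1 * P p.1 p.2) * (P p.1 q.1 * P q.1 q.2)) •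
      (toEuclideanCLM (𝕜 := ℝ) (A p) V + b p) = 0)
    {K : Kernel (𝒮 × 𝒮) (𝒮 × 𝒮)} [IsMarkovKernel K]
    (hK : ∀ p q : 𝒮 × 𝒮, K p {q} = ENNReal.ofReal (P p.1 q.1 * P q.1 q.2)) {α : ℝ} (hα : α ≠ 0)
    {hsm : Measurable fun q : ((𝒮 × 𝒮) × EuclideanSpace ℝ 𝒮) × (𝒮 × 𝒮) =>
      q.1.2 + α • (toEuclideanCLM (𝕜 := ℝ) (A q.1.1) q.1.2 + b q.1.1)}
    {ν : Measure ((𝒮 × 𝒮) × EuclideanSpace ℝ 𝒮)} [IsProbabilityMeasure ν]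
    (hν : (jointKernel K A b α hsm).Invariant ν) (hint : Integrable (fun p => p.2) ν) :
    ∫ p, p.2 ∂ν = V := by
  set w : 𝒮 × 𝒮 → ℝ := fun x => (ν.slice x).real Set.univ
  set m : 𝒮 × 𝒮 → EuclideanSpace ℝ 𝒮 := fun x => ∫ θ, θ ∂ν.slice x
  have hk : ∀ x q : 𝒮 × 𝒮, (K x {q}).toReal = P x.1 q.1 * P q.1 q.2 := fun x q => by
    rw [hK, ENNReal.toReal_ofReal (mul_nonneg (hP.1 _ _) (hP.1 _ _))]
  have hw : ∀ q, w q = ∑ x, P x.1 q.1 * P q.1 q.2 * w x := fun q => by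
    simpa only [hk] using LSA.measureReal_slice_eq_sum_of_invariant K A b α hsm hν q
  have hw1 : ∑ x, w x = 1 := by simp [w, Measure.sum_measureReal_slice_univ]
  have hwπ := eq_stationary_of_pair_recurrence hP hprim hπ1 hπ hw hw1
  have hm : ∀ q, m q = ∑ x, (P x.1 q.1 * P q.1 q.2) •
      (m x + α • (toEuclideanCLM (𝕜 := ℝ) (A x) (m x) + w x • b x)) := fun q => by
    simpa only [hk] using LSA.integral_slice_eq_sum_of_invariant K A b α hsm hν hint q
  have hd := sub_smul_eq_sum_of_zero_bias (fun x => (toEuclideanCLM (𝕜 := ℝ) (A x)).toLinearMap)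
    b α (fun x q => P x.1 q.1 * P q.1 q.2) hw hm (θ := V) fun q => by
      simpa only [hwπ, mul_comm, ContinuousLinearMap.coe_coe] using hbias q
  have hd0 : (fun q u => (m q - w q • V) u) = 0 := by
    refine eq_zero_of_pair_recurrence hP hprim hπ0 hπ1 hπ hγ0 hγ1 (mul_ne_zero hα hc)
      fun q u => ?_
    rw [hd q]
    simp only [WithLp.ofLp_sum, Finset.sum_apply, PiLp.smul_apply, PiLp.add_apply, smul_eq_mul,
      ContinuousLinearMap.coe_coe, toEuclideanCLM_apply hA]
    exact Finset.sum_congr rfl fun x _ => by split_ifs <;> ring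
  calc ∫ p, p.2 ∂ν = ∑ x, m x :=
        (Measure.sum_integral_slice aestronglyMeasurable_id hint).symm
    _ = ∑ x, w x • V := Finset.sum_congr rfl fun x _ => by
        exact sub_eq_zero.1 <| WithLp.ofLp_injective 2 <| congrFun hd0 x
    _ = V := by rw [← Finset.sum_smul, hw1, one_smul]

end TabularTD

theorem stmt14_general
    {𝒮 : Type*} [Fintype 𝒮] [DecidableEq 𝒮]
    [MeasurableSpace 𝒮] [MeasurableSingletonClass 𝒮]
    -- the Markov reward process: transition matrix `PS`, irreducible and aperiodic
    -- (primitive), stationary distribution `πS`, reward `r`, discount `γ`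
    (PS : 𝒮 → 𝒮 → ℝ) (hPS0 : ∀ s s', 0 ≤ PS s s') (hPS1 : ∀ s, ∑ s', PS s s' = 1)
    (hprim : ∃ N : ℕ, ∀ s s', 0 < ((Matrix.of PS) ^ N) s s')
    (πS : 𝒮 → ℝ) (hπS0 : ∀ s, 0 ≤ πS s) (hπS1 : ∑ s, πS s = 1)
    (hπSinv : ∀ s', ∑ s, πS s * PS s s' = πS s')
    (r : 𝒮 → ℝ) (γ : ℝ) (hγ0 : 0 ≤ γ) (hγ1 : γ < 1)
    -- `V` is the value function, the unique solution of the Bellman equation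
    (V : EuclideanSpace ℝ 𝒮) (hV : ∀ s, V s = r s + γ * ∑ s', PS s s' * V s')
    -- the semi-simulator data chain `x_k = (s_k, s_k^next)` on `𝒮 × 𝒮`
    (K : Kernel (𝒮 × 𝒮) (𝒮 × 𝒮)) [IsMarkovKernel K]
    (hK : ∀ p q : 𝒮 × 𝒮, K p {q} = ENNReal.ofReal (PS p.1 q.1 * PS q.1 q.2))
    -- the tabular TD(0) coefficients `A(x) = e_s (γ e_{s'} - e_s)ᵀ`, `b(x) = r(s) e_s`,
    -- rescaled by a factor `c > 0` so that `sup ‖A‖ ≤ 1`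
    (c : ℝ) (hc : 0 < c)
    (A : 𝒮 × 𝒮 → Matrix 𝒮 𝒮 ℝ)
    (hA : ∀ p i j, A p i j =
      c * (if i = p.1 then γ * (if j = p.2 then 1 else 0) - (if j = p.1 then 1 else 0) else 0))
    (b : 𝒮 × 𝒮 → EuclideanSpace ℝ 𝒮)
    (hb : ∀ p j, b p j = c * (if j = p.1 then r p.1 else 0))
    -- `Ā`, `b̄`, and the Hurwitz property
    (Abar : Matrix 𝒮 𝒮 ℝ)
    (hAbar : ∀ i j, Abar i j = ∑ p : 𝒮 × 𝒮, (πS p.1 * PS p.1 p.2) * A p i j)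
    (bbar : EuclideanSpace ℝ 𝒮)
    (hbbar : ∀ j, bbar j = ∑ p : 𝒮 × 𝒮, (πS p.1 * PS p.1 p.2) * b p j)
    -- the target `θ*`
    (θstar : EuclideanSpace ℝ 𝒮)
    (hθstar : Matrix.toEuclideanCLM (𝕜 := ℝ) Abar θstar + bbar = 0)
    -- the Lyapunov matrix and its largest eigenvalue
    (Γ : Matrix 𝒮 𝒮 ℝ)
    (hLyap : Matrix.transpose Abar * Γ + Γ * Abar = -1)
    -- stepsize, mixing time and the stepsize condition
    (α : ℝ) (hα : 0 < α)
    -- the invariant distribution of the joint chain `(x_k, θ_k)`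
    (hsm : Measurable fun q : ((𝒮 × 𝒮) × EuclideanSpace ℝ 𝒮) × (𝒮 × 𝒮) =>
      q.1.2 + α • (Matrix.toEuclideanCLM (𝕜 := ℝ) (A q.1.1) q.1.2 + b q.1.1))
    (ν : Measure ((𝒮 × 𝒮) × EuclideanSpace ℝ 𝒮)) [IsProbabilityMeasure ν]
    (hνinv : Kernel.Invariant (jointKernel K A b α hsm) ν)
    (hνL2 : Integrable (fun p => ‖p.2‖ ^ 2) ν) :
    -- the zero-bias condition `E[A(x_k) θ* + b(x_k) ∣ x_{k+1}] = 0` holds, and the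
    -- asymptotic bias of TD(0) vanishes: `E[θ_∞] = θ* = V`
    (∀ q : 𝒮 × 𝒮,
      ∑ p : 𝒮 × 𝒮, ((πS p.1 * PS p.1 p.2) * (PS p.1 q.1 * PS q.1 q.2)) •
        (Matrix.toEuclideanCLM (𝕜 := ℝ) (A p) V + b p) = 0) ∧
    θstar = V ∧ (∫ p, p.2 ∂ν) = V := by
  have hP : Matrix.of PS ∈ Matrix.rowStochastic ℝ 𝒮 :=
    Matrix.mem_rowStochastic_iff_sum.2 ⟨hPS0, hPS1⟩
  have hlocal := TabularTD.sum_smul_tdError_eq_zero hA hb hPS1 hV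
  have hbias : ∀ q : 𝒮 × 𝒮, ∑ p : 𝒮 × 𝒮, ((πS p.1 * PS p.1 p.2) * (PS p.1 q.1 * PS q.1 q.2)) •
      (Matrix.toEuclideanCLM (𝕜 := ℝ) (A p) V + b p) = 0 := fun q => calc
    _ = ∑ p : 𝒮 × 𝒮, (πS p.1 * (PS p.1 q.1 * PS q.1 q.2) * PS p.1 p.2) •
        (Matrix.toEuclideanCLM (𝕜 := ℝ) (A p) V + b p) :=
      Finset.sum_congr rfl fun p _ => by rw [mul_right_comm]
    _ = 0 := sum_mul_smul_eq_zero hlocal fun s => πS s * (PS s q.1 * PS q.1 q.2)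
  have hAbarV : Matrix.toEuclideanCLM (𝕜 := ℝ) Abar V + bbar = 0 := by
    rw [Matrix.toEuclideanCLM_add_eq_sum _ hAbar hbbar]
    exact sum_mul_smul_eq_zero hlocal πS
  have hint : Integrable (fun p => p.2) ν :=
    ((memLp_two_iff_integrable_sq_norm measurable_snd.aestronglyMeasurable).2 hνL2).integrable
      one_le_two
  refine ⟨hbias, Matrix.toEuclideanCLM_injective_of_lyapunov hLyap ?_,
    TabularTD.integral_snd_eq_of_invariant hP hprim hπS0 hπS1 (funext hπSinv) hγ0 hγ1 hc.ne' hA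
      hbias hK hα.ne' hνinv hint⟩
  rw [eq_neg_of_add_eq_zero_left hθstar, eq_neg_of_add_eq_zero_left hAbarV]

theorem stmt14
    {𝒮 : Type*} [Fintype 𝒮] [DecidableEq 𝒮] [Nonempty 𝒮]
    [MeasurableSpace 𝒮] [MeasurableSingletonClass 𝒮]
    -- the Markov reward process: transition matrix `PS`, irreducible and aperiodic
    -- (primitive), stationary distribution `πS`, reward `r`, discount `γ`
    (PS : 𝒮 → 𝒮 → ℝ) (hPS0 : ∀ s s', 0 ≤ PS s s') (hPS1 : ∀ s, ∑ s', PS s s' = 1)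
    (hprim : ∃ N : ℕ, ∀ s s', 0 < ((Matrix.of PS) ^ N) s s')
    (πS : 𝒮 → ℝ) (hπS0 : ∀ s, 0 ≤ πS s) (hπS1 : ∑ s, πS s = 1)
    (hπSinv : ∀ s', ∑ s, πS s * PS s s' = πS s')
    (r : 𝒮 → ℝ) (γ : ℝ) (hγ0 : 0 ≤ γ) (hγ1 : γ < 1)
    -- `V` is the value function, the unique solution of the Bellman equation
    (V : EuclideanSpace ℝ 𝒮) (hV : ∀ s, V s = r s + γ * ∑ s', PS s s' * V s')
    -- the semi-simulator data chain `x_k = (s_k, s_k^next)` on `𝒮 × 𝒮`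
    (K : Kernel (𝒮 × 𝒮) (𝒮 × 𝒮)) [IsMarkovKernel K]
    (hK : ∀ p q : 𝒮 × 𝒮, K p {q} = ENNReal.ofReal (PS p.1 q.1 * PS q.1 q.2))
    -- the tabular TD(0) coefficients `A(x) = e_s (γ e_{s'} - e_s)ᵀ`, `b(x) = r(s) e_s`,
    -- rescaled by a factor `c > 0` so that `sup ‖A‖ ≤ 1`
    (c : ℝ) (hc : 0 < c)
    (A : 𝒮 × 𝒮 → Matrix 𝒮 𝒮 ℝ)
    (hA : ∀ p i j, A p i j =
      c * (if i = p.1 then γ * (if j = p.2 then 1 else 0) - (if j = p.1 then 1 else 0) else 0))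
    (b : 𝒮 × 𝒮 → EuclideanSpace ℝ 𝒮)
    (hb : ∀ p j, b p j = c * (if j = p.1 then r p.1 else 0))
    (hAmax1 : ∀ p, ‖Matrix.toEuclideanCLM (𝕜 := ℝ) (A p)‖ ≤ 1)
    -- `Ā`, `b̄`, and the Hurwitz property
    (Abar : Matrix 𝒮 𝒮 ℝ)
    (hAbar : ∀ i j, Abar i j = ∑ p : 𝒮 × 𝒮, (πS p.1 * PS p.1 p.2) * A p i j)
    (bbar : EuclideanSpace ℝ 𝒮)
    (hbbar : ∀ j, bbar j = ∑ p : 𝒮 × 𝒮, (πS p.1 * PS p.1 p.2) * b p j)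
    (hHurwitz : ∀ z ∈ spectrum ℂ (Abar.map (algebraMap ℝ ℂ)), z.re < 0)
    -- the target `θ*`
    (θstar : EuclideanSpace ℝ 𝒮)
    (hθstar : Matrix.toEuclideanCLM (𝕜 := ℝ) Abar θstar + bbar = 0)
    -- the Lyapunov matrix and its largest eigenvalue
    (Γ : Matrix 𝒮 𝒮 ℝ) (hΓsymm : Γ.IsSymm) (hΓpos : Γ.PosDef)
    (hLyap : Matrix.transpose Abar * Γ + Γ * Abar = -1)
    (γmax : ℝ)
    (hγup : ∀ v : EuclideanSpace ℝ 𝒮, ⟪v, Matrix.toEuclideanCLM (𝕜 := ℝ) Γ v⟫ ≤ γmax * ‖v‖ ^ 2)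
    (hγup' : ∃ v : EuclideanSpace ℝ 𝒮, v ≠ 0 ∧
      ⟪v, Matrix.toEuclideanCLM (𝕜 := ℝ) Γ v⟫ = γmax * ‖v‖ ^ 2)
    -- stepsize, mixing time and the stepsize condition
    (α : ℝ) (hα : 0 < α)
    (Amax bmax : ℝ)
    (hAub : ∀ p, ‖Matrix.toEuclideanCLM (𝕜 := ℝ) (A p)‖ ≤ Amax)
    (hAlub : ∀ e, (∀ p, ‖Matrix.toEuclideanCLM (𝕜 := ℝ) (A p)‖ ≤ e) → Amax ≤ e)
    (hbub : ∀ p, ‖b p‖ ≤ bmax)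
    (hblub : ∀ e, (∀ p, ‖b p‖ ≤ e) → bmax ≤ e)
    (τ : ℕ) (hτ : IsMixingBdd K A b Abar bbar Amax bmax α τ)
    (hτmin : ∀ t, IsMixingBdd K A b Abar bbar Amax bmax α t → τ ≤ t)
    (hstepsize : α * τ < 0.05 / (95 * γmax))
    -- the invariant distribution of the joint chain `(x_k, θ_k)`
    (hsm : Measurable fun q : ((𝒮 × 𝒮) × EuclideanSpace ℝ 𝒮) × (𝒮 × 𝒮) =>
      q.1.2 + α • (Matrix.toEuclideanCLM (𝕜 := ℝ) (A q.1.1) q.1.2 + b q.1.1))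
    (ν : Measure ((𝒮 × 𝒮) × EuclideanSpace ℝ 𝒮)) [IsProbabilityMeasure ν]
    (hνinv : Kernel.Invariant (jointKernel K A b α hsm) ν)
    (hνL2 : Integrable (fun p => ‖p.2‖ ^ 2) ν) :
    -- the zero-bias condition `E[A(x_k) θ* + b(x_k) ∣ x_{k+1}] = 0` holds, and the
    -- asymptotic bias of TD(0) vanishes: `E[θ_∞] = θ* = V`
    (∀ q : 𝒮 × 𝒮,
      ∑ p : 𝒮 × 𝒮, ((πS p.1 * PS p.1 p.2) * (PS p.1 q.1 * PS q.1 q.2)) •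
        (Matrix.toEuclideanCLM (𝕜 := ℝ) (A p) V + b p) = 0) ∧
    θstar = V ∧ (∫ p, p.2 ∂ν) = V :=
  stmt14_general PS hPS0 hPS1 hprim πS hπS0 hπS1 hπSinv r γ hγ0 hγ1 V hV K hK c hc A hA b hb Abar
    hAbar bbar hbbar θstar hθstar Γ hLyap α hα hsm ν hνinv hνL2
end
end
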